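/- Let G = (V, E) be a graph on n vertices, and let H be a spanning subgraph of G obtained as follows: H₀ is a subgraph of G that is t-edge-connected, and H = H₀ ∪ ⋃_{S ∈ 𝒮} E_S, where 𝒮 is the set of all vertex subsets S with ∅ ≠ S ≠ V whose cut in H₀ has size less than 2t, and for each S ∈ 𝒮, E_S is a set of min(2t, |E_G(S, V\S)|) edges of G crossing (S, V\S). If G is 2t-edge-connected, then H is 2t-edge-connected. -/

import Mathlib

open Finset
open scoped Classical

/-- Number of edges of `G` crossing the cut `(S, V \ S)`. -/
noncomputable def cutSize {V : Type*} [Fintype V] [DecidableEq V]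
    (G : SimpleGraph V) (S : Finset V) : ℕ :=
  ((S ×ˢ Sᶜ).filter fun p => G.Adj p.1 p.2).card

/-- `G` is `k`-edge-connected: it is connected and every proper nonempty cut has at
least `k` crossing edges. -/
def IsKEdgeConnected {V : Type*} [Fintype V] [DecidableEq V]
    (k : ℕ) (G : SimpleGraph V) : Prop :=
  G.Connected ∧ ∀ S : Finset V, S.Nonempty → S ≠ Finset.univ → k ≤ cutSize G S

lemma cutSize_mono {V : Type*} [Fintype V] [DecidableEq V]
    {G G' : SimpleGraph V} (h : G ≤ G') (S : Finset V) :
    cutSize G S ≤ cutSize G' S :=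
  Finset.card_le_card <| Finset.monotone_filter_right _ fun _ _ hp => h hp

theorem stmt_5_general {V : Type*} [Fintype V] [DecidableEq V]
    (G H₀ : SimpleGraph V) (t : ℕ)
    (hH₀ : IsKEdgeConnected t H₀)
    (𝒮 : Finset (Finset V))
    (h𝒮 : ∀ S : Finset V,
      S ∈ 𝒮 ↔ (S.Nonempty ∧ S ≠ Finset.univ ∧ cutSize H₀ S < 2 * t))
    (ES : Finset V → SimpleGraph V)
    (hES : ∀ S ∈ 𝒮, ES S ≤ G ∧ (∀ a b : V, (ES S).Adj a b → ((a ∈ S) ↔ b ∉ S)) ∧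
      cutSize (ES S) S = min (2 * t) (cutSize G S))
    (H : SimpleGraph V) (hH : H = H₀ ⊔ ⨆ S ∈ 𝒮, ES S)
    (hG : IsKEdgeConnected (2 * t) G) :
    IsKEdgeConnected (2 * t) H := by
  subst hH
  refine ⟨hH₀.1.mono le_sup_left, fun S hS hSuniv => ?_⟩
  -- A cut that is small in `H₀` lies in `𝒮`, and its augmentation alone already has
  -- `min(2t, |E_G(S, V\S)|) = 2t` crossing edges.
  by_cases hsmall : cutSize H₀ S < 2 * t
  · have hmem : S ∈ 𝒮 := (h𝒮 S).2 ⟨hS, hSuniv, hsmall⟩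
    have hES_le : ES S ≤ H₀ ⊔ ⨆ S ∈ 𝒮, ES S :=
      le_sup_of_le_right (le_iSup₂ (f := fun S _ => ES S) S hmem)
    calc 2 * t = min (2 * t) (cutSize G S) := (min_eq_left (hG.2 S hS hSuniv)).symm
      _ = cutSize (ES S) S := (hES S hmem).2.2.symm
      _ ≤ _ := cutSize_mono hES_le S
  · exact (not_lt.1 hsmall).trans (cutSize_mono le_sup_left S)

/-- Connectivity doubling: if `H₀` is a `t`-edge-connected subgraph of `G`, `𝒮`
collects all proper nonempty cuts of `H₀` of size less than `2t`, and each such cut is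
augmented with a set `E_S` of `min(2t, |E_G(S, V\S)|)` crossing edges of `G`, then the
augmented graph is `2t`-edge-connected, provided `G` itself is `2t`-edge-connected. -/
theorem stmt_5 {V : Type*} [Fintype V] [DecidableEq V] [Nonempty V]
    (G H₀ : SimpleGraph V) (t : ℕ) (ht : 1 ≤ t)
    (hH₀G : H₀ ≤ G) (hH₀ : IsKEdgeConnected t H₀)
    (𝒮 : Finset (Finset V))
    (h𝒮 : ∀ S : Finset V,
      S ∈ 𝒮 ↔ (S.Nonempty ∧ S ≠ Finset.univ ∧ cutSize H₀ S < 2 * t))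
    (ES : Finset V → SimpleGraph V)
    (hES : ∀ S ∈ 𝒮, ES S ≤ G ∧ (∀ a b : V, (ES S).Adj a b → ((a ∈ S) ↔ b ∉ S)) ∧
      cutSize (ES S) S = min (2 * t) (cutSize G S))
    (H : SimpleGraph V) (hH : H = H₀ ⊔ ⨆ S ∈ 𝒮, ES S)
    (hG : IsKEdgeConnected (2 * t) G) :
    IsKEdgeConnected (2 * t) H :=
  stmt_5_general G H₀ t hH₀ 𝒮 h𝒮 ES hES H hH hG
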